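/- arXiv:0904.1118 — 4 statements merged into one kernel-verified Lean document; each statement's English description precedes it below -/
import Mathlib

section
/- For real numbers a < b, the function δ_{a,b}(t) = (b·e^{bt} − a·e^{at})/(e^{bt} − e^{at}) − 1/t is strictly convex on (−∞, 0). -/
open Real Set

/-!
Write `c = b - a`, `m = (a + b) / 2`. Factoring `exp (m t)` out of numerator and denominator gives
`δ_{a,b}(t) = m + (c / 2) · L(c t / 2)` with the Langevin function `L x = coth x - 1 / x`, so
it suffices that `L'' x = 2 cosh x / sinh³ x - 2 / x³ > 0` for `x < 0`, i.e. that
`u³ cosh u < sinh³ u` for `u > 0`. For the latter, put `r = (cosh u)^(1/3)`: the function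
`sinh u / r - u` vanishes at `0` and has derivative `(r² - 1)² (2 r² + 1) / (3 r⁴) > 0`.
-/

theorem StrictConvexOn.const_add_mul_comp_mul {f : ℝ → ℝ} {s t : Set ℝ}
    (hf : StrictConvexOn ℝ s f) (ht : Convex ℝ t) {k : ℝ} (hk : 0 < k)
    (hts : MapsTo (k * ·) t s) (m : ℝ) : StrictConvexOn ℝ t (fun x => m + k * f (k * x)) := by
  refine ⟨ht, fun x hx y hy hxy α β hα hβ hαβ => ?_⟩
  have hkxy : k * x ≠ k * y := by simpa [hk.ne'] using hxy
  have h := mul_lt_mul_of_pos_left (hf.2 (hts hx) (hts hy) hkxy hα hβ hαβ) hk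
  simp only [smul_eq_mul] at h ⊢
  rw [show k * (α * x + β * y) = α * (k * x) + β * (k * y) by ring]
  linear_combination h - m * hαβ

noncomputable def cbrtCosh (x : ℝ) : ℝ := cosh x ^ (1 / 3 : ℝ)

lemma cbrtCosh_pos (x : ℝ) : 0 < cbrtCosh x := rpow_pos_of_pos (cosh_pos x) _

lemma cbrtCosh_pow_three (x : ℝ) : cbrtCosh x ^ 3 = cosh x := by
  rw [cbrtCosh, ← rpow_natCast, ← rpow_mul (cosh_pos x).le]
  norm_num

lemma one_lt_cbrtCosh {x : ℝ} (hx : x ≠ 0) : 1 < cbrtCosh x :=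
  one_lt_rpow (one_lt_cosh.mpr hx) (by norm_num)

lemma hasDerivAt_cbrtCosh (x : ℝ) :
    HasDerivAt cbrtCosh (sinh x / (3 * cbrtCosh x ^ 2)) x := by
  have := cbrtCosh_pos x
  refine ((hasDerivAt_cosh x).rpow_const (p := 1 / 3) (Or.inl (cosh_pos x).ne')).congr_deriv ?_
  rw [rpow_sub_one (cosh_pos x).ne', ← cbrtCosh]
  field_simp
  rw [cbrtCosh_pow_three]

lemma hasDerivAt_sinh_div_cbrtCosh_sub_self (x : ℝ) :
    HasDerivAt (fun x => sinh x / cbrtCosh x - x)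
      ((cbrtCosh x ^ 2 - 1) ^ 2 * (2 * cbrtCosh x ^ 2 + 1) / (3 * cbrtCosh x ^ 4)) x := by
  have hr0 := (cbrtCosh_pos x).ne'
  refine (((hasDerivAt_sinh x).div (hasDerivAt_cbrtCosh x) hr0).sub
    (hasDerivAt_id x)).congr_deriv ?_
  have hsinh : sinh x ^ 2 = cbrtCosh x ^ 6 - 1 := by
    rw [show cbrtCosh x ^ 6 = (cbrtCosh x ^ 3) ^ 2 by ring, cbrtCosh_pow_three, cosh_sq]; ring
  rw [← cbrtCosh_pow_three]
  field_simp
  linear_combination -hsinh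

lemma lt_sinh_div_cbrtCosh {x : ℝ} (hx : 0 < x) : x < sinh x / cbrtCosh x := by
  have hmono : StrictMonoOn (fun x => sinh x / cbrtCosh x - x) (Ici 0) := by
    refine strictMonoOn_of_hasDerivWithinAt_pos (convex_Ici 0)
      (fun y _ => (hasDerivAt_sinh_div_cbrtCosh_sub_self y).continuousAt.continuousWithinAt)
      (fun y _ => (hasDerivAt_sinh_div_cbrtCosh_sub_self y).hasDerivWithinAt) ?_
    rw [interior_Ici]
    intro y hy
    have hr : 1 < cbrtCosh y := one_lt_cbrtCosh hy.ne'
    have : 0 < cbrtCosh y ^ 2 - 1 := by nlinarith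
    positivity
  simpa using hmono self_mem_Ici hx.le hx

lemma pow_three_mul_cosh_lt_sinh_pow_three {x : ℝ} (hx : 0 < x) :
    x ^ 3 * cosh x < sinh x ^ 3 := by
  have h : x * cbrtCosh x < sinh x := (lt_div_iff₀ (cbrtCosh_pos x)).mp (lt_sinh_div_cbrtCosh hx)
  calc x ^ 3 * cosh x = (x * cbrtCosh x) ^ 3 := by rw [mul_pow, cbrtCosh_pow_three]
    _ < sinh x ^ 3 := pow_lt_pow_left₀ h (mul_pos hx (cbrtCosh_pos x)).le (by norm_num)

noncomputable def langevin (x : ℝ) : ℝ := cosh x / sinh x - x⁻¹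

lemma hasDerivAt_langevin {x : ℝ} (hx : x ≠ 0) :
    HasDerivAt langevin ((x ^ 2)⁻¹ - (sinh x ^ 2)⁻¹) x := by
  have hs : sinh x ≠ 0 := sinh_ne_zero.mpr hx
  refine (((hasDerivAt_cosh x).div (hasDerivAt_sinh x) hs).sub (hasDerivAt_inv hx)).congr_deriv ?_
  field_simp
  rw [cosh_sq]
  ring

lemma hasDerivAt_langevin_deriv {x : ℝ} (hx : x ≠ 0) :
    HasDerivAt (fun x => (x ^ 2)⁻¹ - (sinh x ^ 2)⁻¹)
      (2 * cosh x / sinh x ^ 3 - 2 / x ^ 3) x := by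
  have hs : sinh x ≠ 0 := sinh_ne_zero.mpr hx
  refine (((hasDerivAt_pow 2 x).inv (pow_ne_zero 2 hx)).sub
    (((hasDerivAt_sinh x).pow 2).inv (pow_ne_zero 2 hs))).congr_deriv ?_
  simp only [Pi.pow_apply]
  field_simp
  ring

lemma langevin_deriv_strictMonoOn_Iio :
    StrictMonoOn (fun x => (x ^ 2)⁻¹ - (sinh x ^ 2)⁻¹) (Iio 0) := by
  have hderiv (x : ℝ) (hx : x ∈ Iio 0) := hasDerivAt_langevin_deriv (ne_of_lt hx)
  refine strictMonoOn_of_hasDerivWithinAt_pos (convex_Iio 0)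
    (f' := fun x => 2 * cosh x / sinh x ^ 3 - 2 / x ^ 3)
    (fun x hx => (hderiv x hx).continuousAt.continuousWithinAt) ?_ ?_ <;> rw [interior_Iio]
  · exact fun x hx => (hderiv x hx).hasDerivWithinAt
  intro x hx
  have hsx : sinh x < 0 := sinh_neg_iff.mpr hx
  have key : sinh x ^ 3 < x ^ 3 * cosh x := by
    simpa [Odd.neg_pow (by decide : Odd 3)] using
      pow_three_mul_cosh_lt_sinh_pow_three (neg_pos.mpr hx)
  have hx3 : x ^ 3 < 0 := Odd.pow_neg (by decide) hx
  have hs3 : sinh x ^ 3 < 0 := Odd.pow_neg (by decide) hsx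
  rw [div_sub_div _ _ hs3.ne hx3.ne]
  exact div_pos (by linarith) (mul_pos_of_neg_of_neg hs3 hx3)

lemma langevin_strictConvexOn_Iio : StrictConvexOn ℝ (Iio 0) langevin := by
  refine StrictMonoOn.strictConvexOn_of_deriv (convex_Iio 0)
    (fun x hx => (hasDerivAt_langevin (ne_of_lt hx)).continuousAt.continuousWithinAt) ?_
  rw [interior_Iio]
  exact langevin_deriv_strictMonoOn_Iio.congr fun x hx =>
    ((hasDerivAt_langevin (ne_of_lt hx)).deriv).symm

lemma div_sub_one_div_eq_langevin {a b t : ℝ} (hab : a ≠ b) (ht : t ≠ 0) :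
    (b * exp (b * t) - a * exp (a * t)) / (exp (b * t) - exp (a * t)) - 1 / t =
      (a + b) / 2 + (b - a) / 2 * langevin ((b - a) / 2 * t) := by
  have hba : b - a ≠ 0 := sub_ne_zero.mpr hab.symm
  obtain ⟨x, rfl⟩ : ∃ x, t = 2 / (b - a) * x := ⟨(b - a) / 2 * t, by field_simp⟩
  have hx : x ≠ 0 := by rintro rfl; simp at ht
  have hs := sinh_ne_zero.mpr hx
  have hb : exp (b * (2 / (b - a) * x)) = exp ((a + b) / (b - a) * x) * (cosh x + sinh x) := by
    rw [cosh_add_sinh, ← exp_add]; congr 1; field_simp; ring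
  have ha : exp (a * (2 / (b - a) * x)) = exp ((a + b) / (b - a) * x) * (cosh x - sinh x) := by
    rw [cosh_sub_sinh, ← exp_add]; congr 1; field_simp; ring
  rw [langevin, hb, ha, show (b - a) / 2 * (2 / (b - a) * x) = x by field_simp, ← mul_sub,
    show cosh x + sinh x - (cosh x - sinh x) = 2 * sinh x by ring]
  field_simp
  ring

theorem delta_strictConvexOn_neg (a b : ℝ) (hab : a < b) :
    StrictConvexOn ℝ (Set.Iio (0 : ℝ)) (fun t : ℝ =>
      (b * Real.exp (b * t) - a * Real.exp (a * t)) /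
        (Real.exp (b * t) - Real.exp (a * t)) - 1 / t) := by
  have hk : 0 < (b - a) / 2 := by linarith
  refine (langevin_strictConvexOn_Iio.const_add_mul_comp_mul (convex_Iio 0) hk
    (fun t ht => mul_neg_of_pos_of_neg hk ht) ((a + b) / 2)).congr fun t ht => ?_
  exact (div_sub_one_div_eq_langevin hab.ne (ne_of_lt ht)).symm
end

section
/- For real numbers a < b and any 0 < τ < 1, the inequality δ_{a,b}(τt) < δ_{a,b}(t) holds for all t > 0. -/
/-!
Writing `e^{bt} = e^{at} e^{(b-a)t}` gives `δ_{a,b}(t) = b + (b - a) ψ((b - a) t)` with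
`ψ(s) = 1/(e^s - 1) - 1/s`. Since `ψ'(s) = 1/s² - e^s/(e^s - 1)²` and
`e^s - 1 = 2 e^{s/2} sinh(s/2)`, the inequality `|sinh x| > |x|` makes `ψ` strictly increasing
on `(0, ∞)`, hence so is `δ_{a,b}`, and `τ t < t`.
-/

open Real Set

noncomputable def delta (a b t : ℝ) : ℝ :=
  (b * exp (b * t) - a * exp (a * t)) / (exp (b * t) - exp (a * t)) - 1 / t

lemma sq_lt_sinh_sq {x : ℝ} (hx : x ≠ 0) : x ^ 2 < sinh x ^ 2 := by
  rcases hx.lt_or_gt with hx | hx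
  · have := sinh_lt_self_iff.mpr hx
    nlinarith
  · have := self_lt_sinh_iff.mpr hx
    nlinarith

lemma sq_mul_exp_lt_sq_exp_sub_one {s : ℝ} (hs : s ≠ 0) : s ^ 2 * exp s < (exp s - 1) ^ 2 := by
  have hexp : exp s = exp (s / 2) ^ 2 := by rw [← exp_nat_mul]; ring_nf
  have hsinh : exp s - 1 = 2 * exp (s / 2) * sinh (s / 2) := by
    rw [sinh_eq, hexp, exp_neg]
    field_simp
  calc s ^ 2 * exp s = 4 * (s / 2) ^ 2 * exp (s / 2) ^ 2 := by rw [hexp]; ring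
    _ < 4 * sinh (s / 2) ^ 2 * exp (s / 2) ^ 2 := by
      gcongr 4 * ?_ * _
      exact sq_lt_sinh_sq (div_ne_zero hs two_ne_zero)
    _ = (exp s - 1) ^ 2 := by rw [hsinh]; ring

lemma exp_sub_one_ne_zero {s : ℝ} (hs : s ≠ 0) : exp s - 1 ≠ 0 :=
  sub_ne_zero.mpr ((exp_eq_one_iff s).not.mpr hs)

lemma hasDerivAt_inv_exp_sub_one_sub_inv {s : ℝ} (hs : s ≠ 0) :
    HasDerivAt (fun s => (exp s - 1)⁻¹ - s⁻¹) ((s ^ 2)⁻¹ - exp s / (exp s - 1) ^ 2) s := by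
  have h := (((hasDerivAt_exp s).sub_const 1).inv (exp_sub_one_ne_zero hs)).sub
    (hasDerivAt_inv hs)
  exact h.congr_deriv (by ring)

lemma strictMonoOn_inv_exp_sub_one_sub_inv :
    StrictMonoOn (fun s => (exp s - 1)⁻¹ - s⁻¹) (Ioi 0) := by
  refine strictMonoOn_of_deriv_pos (convex_Ioi 0) (fun s hs => ?_) (fun s hs => ?_)
  · exact (hasDerivAt_inv_exp_sub_one_sub_inv hs.ne').continuousAt.continuousWithinAt
  · rw [interior_Ioi] at hs
    have hs0 : s ≠ 0 := hs.ne'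
    have hexp := exp_sub_one_ne_zero hs0
    rw [(hasDerivAt_inv_exp_sub_one_sub_inv hs0).deriv, sub_pos, div_lt_iff₀ (by positivity),
      inv_mul_eq_div, lt_div_iff₀ (by positivity)]
    simpa [mul_comm] using sq_mul_exp_lt_sq_exp_sub_one hs0

lemma delta_eq {a b t : ℝ} (hab : a ≠ b) (ht : t ≠ 0) :
    delta a b t = b + (b - a) * ((exp ((b - a) * t) - 1)⁻¹ - ((b - a) * t)⁻¹) := by
  have hba : b - a ≠ 0 := sub_ne_zero.mpr hab.symm
  have hE : exp (b * t) = exp (a * t) * exp ((b - a) * t) := by rw [← exp_add]; ring_nf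
  have hF := exp_sub_one_ne_zero (mul_ne_zero hba ht)
  rw [delta, hE]
  set E := exp (a * t)
  set F := exp ((b - a) * t)
  have hE0 : E ≠ 0 := (exp_pos _).ne'
  field_simp
  ring

lemma delta_strictMonoOn {a b : ℝ} (hab : a < b) : StrictMonoOn (delta a b) (Ioi 0) := by
  intro s hs t ht hst
  have hba : 0 < b - a := sub_pos.mpr hab
  rw [delta_eq hab.ne hs.ne', delta_eq hab.ne ht.ne', add_lt_add_iff_left,
    mul_lt_mul_iff_right₀ hba]
  exact strictMonoOn_inv_exp_sub_one_sub_inv (mul_pos hba hs) (mul_pos hba ht)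
    (mul_lt_mul_of_pos_left hst hba)

theorem delta_scale_lt (a b : ℝ) (hab : a < b) (τ : ℝ) (hτ0 : 0 < τ) (hτ1 : τ < 1)
    (t : ℝ) (ht : 0 < t) :
    (b * Real.exp (b * (τ * t)) - a * Real.exp (a * (τ * t))) /
        (Real.exp (b * (τ * t)) - Real.exp (a * (τ * t))) - 1 / (τ * t) <
      (b * Real.exp (b * t) - a * Real.exp (a * t)) /
        (Real.exp (b * t) - Real.exp (a * t)) - 1 / t :=
  delta_strictMonoOn hab (mul_pos hτ0 ht) ht (mul_lt_of_lt_one_left ht hτ1)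
end

section
/- For real numbers a < b with max{a, b} = b ≤ 0 and any 0 < τ < 1, the inequality δ_{a,b}(τt) < τ·δ_{a,b}(t) holds for all t > 0; that is, δ_{a,b} is star-shaped on (0, ∞). -/
/-!
Writing `c = b - a`, the quotient in `δ_{a,b}` equals `b + c / (e^{ct} - 1)`, so
`δ_{a,b}(t) = b + c ψ(ct)` with `ψ(s) = 1/(e^s - 1) - 1/s`. Since `ψ(s)/s` is strictly
increasing on `(0, ∞)`, `ψ(τs) < τψ(s)`, and together with `b ≤ τb` this gives the claim.
The sign of the derivative of `ψ(s)/s` reduces to `s(e^s - 1) + s²e^s < 2(e^s - 1)²`, the sum of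
`s < e^s - 1` and `s e^{s/2} < e^s - 1`; the latter is `s/2 < sinh(s/2)`.
-/

open Real Set

noncomputable def invExpSubOneSubInv (s : ℝ) : ℝ := (exp s - 1)⁻¹ - s⁻¹

lemma mul_exp_half_lt_exp_sub_one {s : ℝ} (hs : 0 < s) : s * exp (s / 2) < exp s - 1 := by
  have hsinh : s / 2 < sinh (s / 2) := self_lt_sinh_iff.mpr (by linarith)
  rw [sinh_eq, exp_neg] at hsinh
  have hexp : exp s = exp (s / 2) * exp (s / 2) := by rw [← exp_add]; ring_nf
  calc s * exp (s / 2) < (exp (s / 2) - (exp (s / 2))⁻¹) * exp (s / 2) := by gcongr; linarith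
    _ = exp s - 1 := by rw [hexp, sub_mul, inv_mul_cancel₀ (exp_pos _).ne']

lemma mul_exp_sub_one_add_sq_mul_exp_lt {s : ℝ} (hs : 0 < s) :
    s * (exp s - 1) + s ^ 2 * exp s < 2 * (exp s - 1) ^ 2 := by
  have h₁ : s * (exp s - 1) < (exp s - 1) ^ 2 := by
    have hE : 0 < exp s - 1 := sub_pos.mpr (one_lt_exp_iff.mpr hs)
    rw [sq]; gcongr; linarith [add_one_lt_exp hs.ne']
  have h₂ : s ^ 2 * exp s < (exp s - 1) ^ 2 :=
    calc s ^ 2 * exp s = (s * exp (s / 2)) ^ 2 := by rw [mul_pow, ← exp_nat_mul]; ring_nf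
      _ < (exp s - 1) ^ 2 := by gcongr; exact mul_exp_half_lt_exp_sub_one hs
  linarith

lemma hasDerivAt_invExpSubOneSubInv_div_self {s : ℝ} (hs : 0 < s) :
    HasDerivAt (fun x => invExpSubOneSubInv x / x)
      ((2 * (exp s - 1) ^ 2 - s * (exp s - 1) - s ^ 2 * exp s) / (s ^ 3 * (exp s - 1) ^ 2)) s := by
  have hE : exp s - 1 ≠ 0 := (sub_pos.mpr (one_lt_exp_iff.mpr hs)).ne'
  have hψ : HasDerivAt invExpSubOneSubInv (-exp s / (exp s - 1) ^ 2 - -(s ^ 2)⁻¹) s :=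
    (((hasDerivAt_exp s).sub_const 1).inv hE).sub (hasDerivAt_inv hs.ne')
  refine (hψ.div (hasDerivAt_id s) hs.ne').congr_deriv ?_
  rw [invExpSubOneSubInv, id]
  field_simp
  ring

lemma strictMonoOn_invExpSubOneSubInv_div_self :
    StrictMonoOn (fun s => invExpSubOneSubInv s / s) (Ioi 0) := by
  refine strictMonoOn_of_hasDerivWithinAt_pos (convex_Ioi 0)
    (f' := fun s => (2 * (exp s - 1) ^ 2 - s * (exp s - 1) - s ^ 2 * exp s) /
      (s ^ 3 * (exp s - 1) ^ 2))
    (fun s hs => (hasDerivAt_invExpSubOneSubInv_div_self hs).continuousAt.continuousWithinAt)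
    (fun s hs => ?_) (fun s hs => ?_)
  · rw [interior_Ioi] at hs
    exact (hasDerivAt_invExpSubOneSubInv_div_self hs).hasDerivWithinAt
  · rw [interior_Ioi, mem_Ioi] at hs
    have hE : 0 < exp s - 1 := sub_pos.mpr (one_lt_exp_iff.mpr hs)
    exact div_pos (by linarith [mul_exp_sub_one_add_sq_mul_exp_lt hs]) (by positivity)

lemma StrictMonoOn.apply_mul_lt_mul_of_div_self {f : ℝ → ℝ}
    (hf : StrictMonoOn (fun x => f x / x) (Ioi 0)) {τ x : ℝ} (hτ0 : 0 < τ) (hτ1 : τ < 1)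
    (hx : 0 < x) : f (τ * x) < τ * f x := by
  have hτx : 0 < τ * x := mul_pos hτ0 hx
  calc f (τ * x) = τ * x * (f (τ * x) / (τ * x)) := by field_simp
    _ < τ * x * (f x / x) :=
      mul_lt_mul_of_pos_left (hf hτx hx (mul_lt_of_lt_one_left hx hτ1)) hτx
    _ = τ * f x := by field_simp

lemma mul_exp_sub_mul_exp_div_exp_sub_exp_sub_inv {a b t : ℝ} (hab : a ≠ b) (ht : t ≠ 0) :
    (b * exp (b * t) - a * exp (a * t)) / (exp (b * t) - exp (a * t)) - 1 / t
      = b + (b - a) * invExpSubOneSubInv ((b - a) * t) := by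
  have hc : (b - a) * t ≠ 0 := mul_ne_zero (sub_ne_zero.mpr hab.symm) ht
  have hE : exp ((b - a) * t) - 1 ≠ 0 := sub_ne_zero.mpr (by rwa [Ne, exp_eq_one_iff])
  have hbt : exp (b * t) = exp (a * t) * exp ((b - a) * t) := by rw [← exp_add]; ring_nf
  have ha := (exp_pos (a * t)).ne'
  rw [hbt, ← mul_sub_one, invExpSubOneSubInv]
  generalize exp ((b - a) * t) = E at hE ⊢
  field_simp
  ring

theorem delta_star_shaped (a b : ℝ) (hab : a < b) (hb : b ≤ 0)
    (τ : ℝ) (hτ0 : 0 < τ) (hτ1 : τ < 1) (t : ℝ) (ht : 0 < t) :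
    (b * Real.exp (b * (τ * t)) - a * Real.exp (a * (τ * t))) /
        (Real.exp (b * (τ * t)) - Real.exp (a * (τ * t))) - 1 / (τ * t) <
      τ * ((b * Real.exp (b * t) - a * Real.exp (a * t)) /
        (Real.exp (b * t) - Real.exp (a * t)) - 1 / t) := by
  have hc : 0 < b - a := sub_pos.mpr hab
  rw [mul_exp_sub_mul_exp_div_exp_sub_exp_sub_inv hab.ne (mul_pos hτ0 ht).ne',
    mul_exp_sub_mul_exp_div_exp_sub_exp_sub_inv hab.ne ht.ne', mul_left_comm]
  have hψ := strictMonoOn_invExpSubOneSubInv_div_self.apply_mul_lt_mul_of_div_self hτ0 hτ1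
    (mul_pos hc ht)
  nlinarith [mul_lt_mul_of_pos_left hψ hc]
end

section
/- Let θ(x) = ln Γ(x) − (x − 1/2)ln x + x − (1/2)ln(2π) be the remainder of Binet's first formula. Then θ is sub-additive on (0, ∞): θ(x + y) ≤ θ(x) + θ(y) for all x, y > 0, and −θ is star-shaped: τ·θ(x) ≤ θ(τx) for all x > 0 and 0 < τ < 1. -/
/-!
`θ x - θ (x + 1) = (x + 1/2) log (1 + 1/x) - 1 = ∑_{k ≥ 1} (2x+1)^(-2k) / (2k+1)` is nonnegative
and decreasing in `x`, while `θ (x + n) → 0` by Stirling's formula and log-convexity of `Γ`.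
Telescoping, `θ` is nonnegative and decreasing on `(0, ∞)`, whence
`θ (x + y) ≤ θ x ≤ θ x + θ y` and `τ θ x ≤ θ x ≤ θ (τ x)`.
-/

open Real Filter Topology

noncomputable def binetTheta (x : ℝ) : ℝ :=
  log (Gamma x) - (x - 1 / 2) * log x + x - 1 / 2 * log (2 * π)

lemma log_Gamma_add_one {x : ℝ} (hx : 0 < x) :
    log (Gamma (x + 1)) = log (Gamma x) + log x := by
  rw [Gamma_add_one hx.ne', log_mul hx.ne' (Gamma_pos_of_pos hx).ne', add_comm]

lemma binetTheta_sub_binetTheta_add_one {x : ℝ} (hx : 0 < x) :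
    binetTheta x - binetTheta (x + 1) = (x + 1 / 2) * log (1 + x⁻¹) - 1 := by
  have hlog : log (1 + x⁻¹) = log (x + 1) - log x := by
    rw [← log_div (by positivity) hx.ne', add_div, div_self hx.ne', one_div]
  rw [binetTheta, binetTheta, log_Gamma_add_one hx, hlog]
  ring

/-- Expand `log (1 + x⁻¹)` in odd powers of `1 / (2x + 1)`. -/
lemma hasSum_binetTheta_sub_binetTheta_add_one {x : ℝ} (hx : 0 < x) :
    HasSum (fun k : ℕ => 1 / (2 * ((k + 1 : ℕ) : ℝ) + 1) * ((1 / (2 * x + 1)) ^ 2) ^ (k + 1))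
      (binetTheta x - binetTheta (x + 1)) := by
  let f (k : ℕ) : ℝ := 1 / (2 * k + 1) * ((1 / (2 * x + 1)) ^ 2) ^ k
  have hf : HasSum f ((x + 1 / 2) * log (1 + x⁻¹)) := by
    convert! (hasSum_log_one_add_inv hx).mul_left (x + 1 / 2) using 1
    funext k
    dsimp only [f]
    rw [← pow_mul, pow_succ]
    field
  have hf0 : ∑ k ∈ Finset.range 1, f k = 1 := by simp [f]
  have hshift := (hasSum_nat_add_iff' 1).mpr hf
  rw [hf0] at hshift
  rw [binetTheta_sub_binetTheta_add_one hx]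
  exact hshift

lemma binetTheta_add_one_le {x : ℝ} (hx : 0 < x) : binetTheta (x + 1) ≤ binetTheta x :=
  sub_nonneg.mp <| (hasSum_binetTheta_sub_binetTheta_add_one hx).nonneg fun _ => by positivity

lemma binetTheta_sub_binetTheta_add_one_le_of_le {x y : ℝ} (hx : 0 < x) (hxy : x ≤ y) :
    binetTheta y - binetTheta (y + 1) ≤ binetTheta x - binetTheta (x + 1) := by
  refine hasSum_le (fun k => ?_) (hasSum_binetTheta_sub_binetTheta_add_one (hx.trans_le hxy))
    (hasSum_binetTheta_sub_binetTheta_add_one hx)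
  have hy : 0 < y := hx.trans_le hxy
  gcongr

lemma log_Gamma_add_le {x y : ℝ} (hy : 0 < y) (hx : 0 < x) :
    log (Gamma (y + x)) ≤ log (Gamma y) + x * log (y + x) := by
  have hslope := (convexOn_iff_slope_mono_adjacent.mp convexOn_log_Gamma).2
    (Set.mem_Ioi.mpr hy) (Set.mem_Ioi.mpr (by linarith : 0 < y + x + 1))
    (by linarith : y < y + x) (by linarith : y + x < y + x + 1)
  simp only [Function.comp_apply, log_Gamma_add_one (by linarith : 0 < y + x),
    add_sub_cancel_left, div_one, div_le_iff₀ hx] at hslope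
  linarith

lemma log_Gamma_add_ge {x y : ℝ} (hy : 1 < y) (hx : 0 < x) :
    log (Gamma y) + x * log (y - 1) ≤ log (Gamma (y + x)) := by
  have hslope := (convexOn_iff_slope_mono_adjacent.mp convexOn_log_Gamma).2
    (Set.mem_Ioi.mpr (by linarith : 0 < y - 1)) (Set.mem_Ioi.mpr (by linarith : 0 < y + x))
    (by linarith : y - 1 < y) (by linarith : y < y + x)
  have hrec := log_Gamma_add_one (by linarith : 0 < y - 1)
  rw [sub_add_cancel] at hrec
  simp only [Function.comp_apply, hrec, sub_sub_cancel, add_sub_cancel_left, div_one,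
    le_div_iff₀ hx] at hslope
  linarith

lemma binetTheta_natCast {n : ℕ} (hn : n ≠ 0) :
    binetTheta n = log (Stirling.stirlingSeq n) - log √π := by
  have hn' : (0 : ℝ) < n := Nat.cast_pos.mpr (Nat.pos_of_ne_zero hn)
  have hfact : log (n.factorial : ℝ) = log (Gamma n) + log n := by
    rw [← Gamma_nat_eq_factorial, log_Gamma_add_one hn']
  rw [binetTheta, Stirling.log_stirlingSeq_formula, hfact, log_sqrt pi_pos.le,
    log_mul two_ne_zero hn'.ne', log_div hn'.ne' (exp_ne_zero 1), log_exp,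
    log_mul two_ne_zero pi_ne_zero]
  ring

lemma tendsto_binetTheta_natCast : Tendsto (fun n : ℕ => binetTheta n) atTop (𝓝 0) := by
  have hlim := ((continuousAt_log (sqrt_pos.mpr pi_pos).ne').tendsto.comp
    Stirling.tendsto_stirlingSeq_sqrt_pi).sub_const (log √π)
  rw [sub_self] at hlim
  refine hlim.congr' ?_
  filter_upwards [eventually_ne_atTop 0] with n hn
  exact (binetTheta_natCast hn).symm

lemma log_add_sub_log_eventuallyEq (a : ℝ) :
    (fun y => log (y + a) - log y) =ᶠ[atTop] fun y => log (1 + a / y) := by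
  filter_upwards [eventually_gt_atTop 0, eventually_gt_atTop (-a)] with y hy hya
  rw [← log_div (by linarith) hy.ne', add_div, div_self hy.ne']

lemma tendsto_log_add_sub_log (a : ℝ) :
    Tendsto (fun y => log (y + a) - log y) atTop (𝓝 0) := by
  have h : Tendsto (fun y : ℝ => 1 + a / y) atTop (𝓝 1) := by
    simpa using tendsto_const_nhds.add (tendsto_const_nhds.div_atTop (tendsto_id (α := ℝ)))
  simpa using ((continuousAt_log one_ne_zero).tendsto.comp h).congr'
    (log_add_sub_log_eventuallyEq a).symm

lemma tendsto_mul_log_add_sub_log (a : ℝ) :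
    Tendsto (fun y => y * (log (y + a) - log y)) atTop (𝓝 a) := by
  refine (tendsto_mul_log_one_add_div_atTop a).congr' ?_
  filter_upwards [log_add_sub_log_eventuallyEq a] with y hy
  rw [hy]

/-- Log-convexity of `Γ` pins `log Γ (y + x) - log Γ y` between `x log (y - 1)` and
`x log (y + x)`; with either value the difference tends to `0`. -/
lemma tendsto_binetTheta_add_sub_binetTheta {x : ℝ} (hx : 0 < x) :
    Tendsto (fun y => binetTheta (y + x) - binetTheta y) atTop (𝓝 0) := by
  have hD := tendsto_log_add_sub_log x
  have hupper := (tendsto_const_nhds (x := x)).sub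
    ((tendsto_mul_log_add_sub_log x).sub (hD.const_mul (1 / 2)))
  rw [mul_zero, sub_zero, sub_self] at hupper
  have hlower := hupper.add (((tendsto_log_add_sub_log (-1)).sub hD).const_mul x)
  rw [sub_zero, mul_zero, add_zero] at hlower
  refine tendsto_of_tendsto_of_tendsto_of_le_of_le' hlower hupper ?_ ?_
  · filter_upwards [eventually_gt_atTop 1] with y hy
    have := log_Gamma_add_ge hy hx
    rw [binetTheta, binetTheta, ← sub_eq_add_neg]
    linarith
  · filter_upwards [eventually_gt_atTop 0] with y hy
    have := log_Gamma_add_le hy hx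
    rw [binetTheta, binetTheta]
    linarith

lemma tendsto_binetTheta_add_natCast {x : ℝ} (hx : 0 < x) :
    Tendsto (fun n : ℕ => binetTheta (x + n)) atTop (𝓝 0) := by
  have h := tendsto_binetTheta_natCast.add
    ((tendsto_binetTheta_add_sub_binetTheta hx).comp tendsto_natCast_atTop_atTop)
  rw [add_zero] at h
  refine h.congr fun n => ?_
  simp only [Function.comp_apply, add_comm x, add_sub_cancel]

lemma binetTheta_nonneg {x : ℝ} (hx : 0 < x) : 0 ≤ binetTheta x := by
  have hanti : Antitone fun n : ℕ => binetTheta (x + n) := antitone_nat_of_succ_le fun n => by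
    rw [Nat.cast_succ, ← add_assoc]
    exact binetTheta_add_one_le (by positivity)
  simpa using hanti.le_of_tendsto (tendsto_binetTheta_add_natCast hx) 0

lemma binetTheta_antitoneOn : AntitoneOn binetTheta (Set.Ioi 0) := by
  intro x (hx : 0 < x) y (hy : 0 < y) hxy
  have hanti : Antitone fun n : ℕ => binetTheta (x + n) - binetTheta (y + n) :=
    antitone_nat_of_succ_le fun n => by
      have := binetTheta_sub_binetTheta_add_one_le_of_le (by positivity : 0 < x + n)
        (by linarith : x + n ≤ y + n)
      rw [Nat.cast_succ, ← add_assoc, ← add_assoc]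
      linarith
  have hlim := (tendsto_binetTheta_add_natCast hx).sub (tendsto_binetTheta_add_natCast hy)
  rw [sub_zero] at hlim
  simpa using hanti.le_of_tendsto hlim 0

theorem theta_subadditive_and_star_shaped :
    (∀ x y : ℝ, 0 < x → 0 < y →
      (fun z : ℝ => Real.log (Real.Gamma z) - (z - 1 / 2) * Real.log z + z -
          1 / 2 * Real.log (2 * Real.pi)) (x + y) ≤
        (fun z : ℝ => Real.log (Real.Gamma z) - (z - 1 / 2) * Real.log z + z -
          1 / 2 * Real.log (2 * Real.pi)) x +
        (fun z : ℝ => Real.log (Real.Gamma z) - (z - 1 / 2) * Real.log z + z -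
          1 / 2 * Real.log (2 * Real.pi)) y) ∧
    (∀ x τ : ℝ, 0 < x → 0 < τ → τ < 1 →
      τ * ((fun z : ℝ => Real.log (Real.Gamma z) - (z - 1 / 2) * Real.log z + z -
          1 / 2 * Real.log (2 * Real.pi)) x) ≤
        (fun z : ℝ => Real.log (Real.Gamma z) - (z - 1 / 2) * Real.log z + z -
          1 / 2 * Real.log (2 * Real.pi)) (τ * x)) := by
  refine ⟨fun x y hx hy => ?_, fun x τ hx hτ hτ1 => ?_⟩
  · change binetTheta (x + y) ≤ binetTheta x + binetTheta y
    have hdec := binetTheta_antitoneOn hx (show 0 < x + y by positivity) (by linarith)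
    linarith [binetTheta_nonneg hy]
  · change τ * binetTheta x ≤ binetTheta (τ * x)
    have hdec := binetTheta_antitoneOn (show 0 < τ * x by positivity) hx
      (mul_le_of_le_one_left hx.le hτ1.le)
    nlinarith [binetTheta_nonneg hx]
end
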